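/- arXiv:1302.7213 — 2 statements merged into one kernel-verified Lean document; each statement's English description precedes it below -/
import Mathlib

section
/- The image of □^N(π) × Δ^N(r) under the map Ψ(x₁,y₁,…,x_N,y_N) = (√y₁ cos(2x₁), −√y₁ sin(2x₁), …, √y_N cos(2x_N), −√y_N sin(2x_N)) equals B^{2N}(r) ∩ SD^N(r), where B^{2N}(r) is the open ball of radius √r in ℝ^{2N} and SD^N(r) is the N-fold product of slit discs SD(r) = {(u,v) ∈ ℝ² : u² + v² < r} \ {(u,0) : u ≥ 0}. -/
/-!
Each coordinate pair of `Ψ` is `(x, y) ↦ conj (√y · e^{2ix})`. As `2x` ranges over `(0, 2π)`,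
these are polar coordinates onto the plane slit along the nonnegative real axis, with `y`
the squared radius. So `∑ yᵢ < r` is exactly the ball condition `∑ |uᵢ|² < r`, which in
turn forces each `|uᵢ|² < r`. Conversely, the angle of a point `u` off the slit is recovered from the
argument of `-ū`, which lies in `(-π, π)`.
-/

open Real Set

noncomputable def psiCoord (x y : ℝ) : ℝ × ℝ :=
  (√y * cos (2 * x), -(√y * sin (2 * x)))

lemma psiCoord_fst_sq_add_snd_sq (x : ℝ) {y : ℝ} (hy : 0 ≤ y) :
    (psiCoord x y).1 ^ 2 + (psiCoord x y).2 ^ 2 = y := by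
  simp only [psiCoord]
  nlinarith [sq_sqrt hy, sin_sq_add_cos_sq (2 * x)]

lemma psiCoord_not_mem_slit {x y : ℝ} (hx : x ∈ Ioo 0 π) (hy : 0 < y) :
    ¬((psiCoord x y).2 = 0 ∧ 0 ≤ (psiCoord x y).1) := by
  rintro ⟨hsnd, hfst⟩
  have hsqrt : 0 < √y := sqrt_pos.mpr hy
  have hsin : sin (2 * x - π) = 0 := by
    rw [sin_sub_pi, neg_eq_zero]
    simpa [psiCoord, hsqrt.ne'] using hsnd
  have hangle : 2 * x = π := by
    have := (sin_eq_zero_iff_of_lt_of_lt (by linarith [hx.1]) (by linarith [hx.2])).mp hsin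
    linarith
  simp only [psiCoord, hangle, cos_pi] at hfst
  linarith

lemma sq_add_sq_pos_of_not_mem_slit {u v : ℝ} (h : ¬(v = 0 ∧ 0 ≤ u)) :
    0 < u ^ 2 + v ^ 2 := by
  by_contra! hle
  exact h ⟨by nlinarith [sq_nonneg u], by nlinarith [sq_nonneg v]⟩

lemma exists_psiCoord_eq_of_not_mem_slit {u v : ℝ} (h : ¬(v = 0 ∧ 0 ≤ u)) :
    ∃ x ∈ Ioo 0 π, psiCoord x (u ^ 2 + v ^ 2) = (u, v) := by
  set w : ℂ := ⟨-u, v⟩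
  have hw : w ≠ 0 := fun hw0 =>
    h ⟨congrArg Complex.im hw0, (neg_eq_zero.mp (congrArg Complex.re hw0)).ge⟩
  have hnorm : ‖w‖ = √(u ^ 2 + v ^ 2) := by simp [Complex.norm_eq_sqrt_sq_add_sq, w]
  have hnorm_pos : 0 < ‖w‖ := norm_pos_iff.mpr hw
  have harg_ne : w.arg ≠ π := fun hπ => h ⟨(Complex.arg_eq_pi_iff.mp hπ).2,
    by linarith [(Complex.arg_eq_pi_iff.mp hπ).1, show w.re = -u from rfl]⟩
  refine ⟨(w.arg + π) / 2, ⟨?_, ?_⟩, ?_⟩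
  · linarith [Complex.neg_pi_lt_arg w]
  · linarith [lt_of_le_of_ne (Complex.arg_le_pi w) harg_ne]
  · have hangle : 2 * ((w.arg + π) / 2) = w.arg + π := by ring
    simp only [psiCoord, hangle, cos_add_pi, sin_add_pi, Complex.cos_arg hw, Complex.sin_arg,
      ← hnorm]
    ext <;> field_simp <;> simp [w]

/-- The image of □^N(π) × Δ^N(r) under Ψ equals B^{2N}(r) ∩ SD^N(r), where SD(r) is
the open disc of radius √r with the nonnegative real axis removed. -/
theorem psi_image (N : ℕ) (r : ℝ) :
    (fun p : (Fin N → ℝ) × (Fin N → ℝ) => fun i : Fin N =>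
        (Real.sqrt (p.2 i) * Real.cos (2 * p.1 i),
          -(Real.sqrt (p.2 i) * Real.sin (2 * p.1 i)))) ''
      {p : (Fin N → ℝ) × (Fin N → ℝ) |
        (∀ i, 0 < p.1 i ∧ p.1 i < Real.pi) ∧ (∀ i, 0 < p.2 i) ∧ ∑ i, p.2 i < r}
    = {u : Fin N → ℝ × ℝ |
        (∑ i, ((u i).1 ^ 2 + (u i).2 ^ 2)) < r ∧
        ∀ i, ((u i).1 ^ 2 + (u i).2 ^ 2 < r ∧ ¬((u i).2 = 0 ∧ 0 ≤ (u i).1))} := by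
  ext u
  constructor
  · rintro ⟨⟨x, y⟩, ⟨hx, hy, hsum⟩, rfl⟩
    have hnorm i : (psiCoord (x i) (y i)).1 ^ 2 + (psiCoord (x i) (y i)).2 ^ 2 = y i :=
      psiCoord_fst_sq_add_snd_sq (x i) (hy i).le
    refine ⟨(Finset.sum_congr rfl fun i _ => hnorm i).trans_lt hsum, fun i =>
      ⟨?_, psiCoord_not_mem_slit (hx i) (hy i)⟩⟩
    calc (psiCoord (x i) (y i)).1 ^ 2 + (psiCoord (x i) (y i)).2 ^ 2 = y i := hnorm i
      _ ≤ ∑ j, y j := Finset.single_le_sum (fun j _ => (hy j).le) (Finset.mem_univ i)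
      _ < r := hsum
  · rintro ⟨hsum, hcoord⟩
    choose x hx hpsi using fun i => exists_psiCoord_eq_of_not_mem_slit (hcoord i).2
    exact ⟨(x, fun i => (u i).1 ^ 2 + (u i).2 ^ 2),
      ⟨hx, fun i => sq_add_sq_pos_of_not_mem_slit (hcoord i).2, hsum⟩, funext hpsi⟩
end

section
/- Let λ ∈ ℝⁿ with λ₁ ≥ ⋯ ≥ λₙ ≥ 0 and block structure λ_{n₁} > λ_{n₁+1}, …, λ_{n_m} > λ_{n_m+1}, and suppose λₙ ≠ 0. Then min over all coroots α^∨ of SO(2n+1) with ⟨α^∨, λ⟩ > 0 of ⟨α^∨, λ⟩ equals min{λ_{n₁} − λ_{n₁+1}, …, λ_{n_m} − λ_{n_m+1}, 2λₙ}. -/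
/-!
Every coroot pairing `λ_j ± λ_k` or `2λ_j` that is positive dominates one of the listed values:
a sum or a double is at least `2λₙ`, and a positive difference `λ_j - λ_k` has `k` beyond the block
of `j`, so it dominates the gap at the right end of that block. Conversely each listed value is
the positive pairing of `λ` with `e_{n_l} - e_{n_l + 1}` or with `2eₙ`.
-/

lemma exists_lt_and_le_succ {α : Type*} [LinearOrder α] (f : ℕ → α) {x : α} :
    ∀ {m : ℕ}, f 0 < x → x ≤ f (m + 1) → ∃ l ≤ m, f l < x ∧ x ≤ f (l + 1)
  | 0, h0, hm => ⟨0, le_rfl, h0, hm⟩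
  | m + 1, h0, hm => by
    by_cases hx : f (m + 1) < x
    · exact ⟨m + 1, le_rfl, hx, hm⟩
    · obtain ⟨l, hl, hfl⟩ := exists_lt_and_le_succ f h0 (not_lt.mp hx)
      exact ⟨l, hl.trans m.le_succ, hfl⟩

lemma Finset.isLeast_min'_of_subset_of_forall_exists_le {α : Type*} [LinearOrder α] {S : Set α}
    (F : Finset α) (hF : F.Nonempty) (hsub : ↑F ⊆ S) (hle : ∀ v ∈ S, ∃ x ∈ F, x ≤ v) :
    IsLeast S (F.min' hF) :=
  ⟨hsub (F.min'_mem hF), fun v hv =>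
    let ⟨_, hx, hxv⟩ := hle v hv
    (F.min'_le _ hx).trans hxv⟩

lemma exists_gap_le_sub {n m : ℕ} {lam : ℕ → ℝ} {nn : ℕ → ℕ}
    (hlam : ∀ a b : ℕ, 1 ≤ a → a ≤ b → b ≤ n → lam b ≤ lam a)
    (h0 : nn 0 = 0) (hlast : nn (m + 1) = n)
    (hblock : ∀ l, l ≤ m → ∀ i, nn l < i → i ≤ nn (l + 1) → lam i = lam (nn (l + 1)))
    {j k : ℕ} (hj1 : 1 ≤ j) (hjn : j ≤ n) (hk1 : 1 ≤ k) (hkn : k ≤ n) (hkj : lam k < lam j) :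
    ∃ l ∈ Finset.Icc 1 m, lam (nn l) - lam (nn l + 1) ≤ lam j - lam k := by
  obtain ⟨l, hlm, hjl, hjl'⟩ :=
    exists_lt_and_le_succ nn (by omega : nn 0 < j) (by omega : j ≤ nn (m + 1))
  have hjk : j < k := by
    by_contra! hkj'
    exact hkj.not_ge (hlam k j hk1 hkj' hjn)
  have hkl : nn (l + 1) < k := by
    by_contra! hkl
    exact hkj.ne (by rw [hblock l hlm k (by omega) hkl, hblock l hlm j hjl hjl'])
  have hlm' : l + 1 ≤ m := by
    by_contra!
    rw [show l + 1 = m + 1 by omega, hlast] at hkl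
    omega
  refine ⟨l + 1, Finset.mem_Icc.mpr ⟨by omega, hlm'⟩, ?_⟩
  have := hlam (nn (l + 1) + 1) k (by omega) hkl hkn
  rw [← hblock l hlm j hjl hjl']
  linarith

/-- For SO(2n+1) with λ₁ ≥ ⋯ ≥ λₙ > 0 with blocks ending at n₁ < ⋯ < n_m < n_{m+1} = n,
the minimum of ⟨α^∨, λ⟩ over coroots α^∨ with positive pairing (pairings being
λ_j ± λ_k for j ≠ k and 2λ_j) equals
min{λ_{n₁} − λ_{n₁+1}, …, λ_{n_m} − λ_{n_m+1}, 2λₙ}. -/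
theorem min_coroot_pairing_so_odd (n m : ℕ) (hn : 1 ≤ n) (lam : ℕ → ℝ)
    (hlam : ∀ a b : ℕ, 1 ≤ a → a ≤ b → b ≤ n → lam b ≤ lam a)
    (hpos : 0 < lam n)
    (nn : ℕ → ℕ) (h0 : nn 0 = 0) (hlast : nn (m + 1) = n)
    (hmono : ∀ l, l ≤ m → nn l < nn (l + 1))
    (hblock : ∀ l, l ≤ m → ∀ i, nn l < i → i ≤ nn (l + 1) → lam i = lam (nn (l + 1)))
    (hbreak : ∀ l, 1 ≤ l → l ≤ m → lam (nn l + 1) < lam (nn l)) :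
    IsLeast
      {v : ℝ | 0 < v ∧
        ((∃ j k, 1 ≤ j ∧ j ≤ n ∧ 1 ≤ k ∧ k ≤ n ∧ j ≠ k ∧
            (v = lam j - lam k ∨ v = lam j + lam k)) ∨
          (∃ j, 1 ≤ j ∧ j ≤ n ∧ v = 2 * lam j))}
      ((((Finset.Icc 1 m).image fun l => lam (nn l) - lam (nn l + 1)) ∪
          {2 * lam n}).min' ⟨2 * lam n, by simp⟩) := by
  have hnn : StrictMonoOn nn (Set.Iic (m + 1)) := strictMonoOn_Iic_of_lt_succ fun l hl =>
    hmono l (Nat.lt_succ_iff.mp hl)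
  have hlam_n : ∀ j, 1 ≤ j → j ≤ n → lam n ≤ lam j := fun j hj1 hjn => hlam j n hj1 hjn le_rfl
  apply Finset.isLeast_min'_of_subset_of_forall_exists_le
  · intro v hv
    simp only [Finset.coe_union, Finset.coe_image, Finset.coe_Icc, Finset.coe_singleton,
      Set.mem_union, Set.mem_image, Set.mem_Icc, Set.mem_singleton_iff] at hv
    rcases hv with ⟨l, ⟨hl1, hlm⟩, rfl⟩ | rfl
    · have h0l : nn 0 < nn l := hnn (by simp) (by simp; omega) (by omega)
      have hlm' : nn l < nn (m + 1) := hnn (by simp; omega) (by simp) (by omega)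
      exact ⟨sub_pos.mpr (hbreak l hl1 hlm),
        Or.inl ⟨nn l, nn l + 1, by omega, by omega, by omega, by omega, by omega, Or.inl rfl⟩⟩
    · exact ⟨by positivity, Or.inr ⟨n, hn, le_rfl, rfl⟩⟩
  · rintro v ⟨hv, ⟨j, k, hj1, hjn, hk1, hkn, -, rfl | rfl⟩ | ⟨j, hj1, hjn, rfl⟩⟩
    · obtain ⟨l, hl, hgap⟩ := exists_gap_le_sub hlam h0 hlast hblock hj1 hjn hk1 hkn (by linarith)
      exact ⟨_, Finset.mem_union_left _ (Finset.mem_image_of_mem _ hl), hgap⟩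
    · exact ⟨2 * lam n, by simp, by linarith [hlam_n j hj1 hjn, hlam_n k hk1 hkn]⟩
    · exact ⟨2 * lam n, by simp, by linarith [hlam_n j hj1 hjn]⟩
end
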